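/- For the map φ(x,y) = ((sin x · √(m+n)/√(2m+n)) e^{iπ m y}, (cos x · √(m+n)/√(m+2n)) e^{iπ n y}, √(n cos²x/(m+2n) + m sin²x/(2m+n)) e^{-iπ(m+n)y}), the Hermitian product ⟨∂φ/∂x, ∂φ/∂y⟩ vanishes identically, so the induced metric ds² = |∂φ/∂x|² dx² + |∂φ/∂y|² dy² is diagonal in the coordinates (x,y). -/

import Mathlib

noncomputable def conePhi (m n : ℕ) (x y : ℝ) : Fin 3 → ℂ :=
  ![((Real.sin x * Real.sqrt ((m : ℝ) + n) / Real.sqrt (2 * (m : ℝ) + n) : ℝ) : ℂ) *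
      Complex.exp (Complex.I * Real.pi * m * y),
    ((Real.cos x * Real.sqrt ((m : ℝ) + n) / Real.sqrt ((m : ℝ) + 2 * n) : ℝ) : ℂ) *
      Complex.exp (Complex.I * Real.pi * n * y),
    ((Real.sqrt ((n : ℝ) * Real.cos x ^ 2 / ((m : ℝ) + 2 * n) +
        (m : ℝ) * Real.sin x ^ 2 / (2 * (m : ℝ) + n)) : ℝ) : ℂ) *
      Complex.exp (-(Complex.I * Real.pi * ((m : ℝ) + n) * y))]

/-!
Each component of `φ` is `r_j(x) e^{iω_j y}` with `r_j` real, so its contribution to the cross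
term is `-iω_j r_j r_j' = -(i/2) ω_j (r_j²)'`. The amplitudes are balanced so that
`Σ ω_j r_j² = π(m+n)(m sin²x/(2m+n) + n cos²x/(m+2n)) - π(m+n) r_2²` vanishes identically,
hence so does its derivative.
-/

open Complex ComplexConjugate

lemma deriv_ofReal_mul_const {r : ℝ → ℝ} {x : ℝ} (hr : DifferentiableAt ℝ r x) (c : ℂ) :
    deriv (fun t : ℝ => (r t : ℂ) * c) x = ((deriv r x : ℝ) : ℂ) * c :=
  (hr.hasDerivAt.ofReal_comp.mul_const c).deriv

lemma deriv_const_mul_exp_ofReal_mul_I (a : ℂ) (ω y : ℝ) :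
    deriv (fun s : ℝ => a * exp ((ω * s : ℝ) * I)) y = a * (ω * I * exp ((ω * y : ℝ) * I)) := by
  have h : HasDerivAt (fun s : ℝ => ((ω * s : ℝ) : ℂ) * I) (ω * I) y := by
    simpa using (((hasDerivAt_id y).const_mul ω).ofReal_comp).mul_const I
  exact (h.cexp.const_mul a).deriv.trans (by ring)

lemma exp_ofReal_mul_I_mul_conj (θ : ℝ) : exp (θ * I) * conj (exp (θ * I)) = 1 := by
  rw [mul_conj, normSq_eq_norm_sq, norm_exp_ofReal_mul_I]; simp

lemma deriv_mul_conj_deriv_of_phase {r : ℝ → ℝ} {x : ℝ} (hr : DifferentiableAt ℝ r x) (ω y : ℝ) :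
    deriv (fun t : ℝ => (r t : ℂ) * exp ((ω * y : ℝ) * I)) x *
        conj (deriv (fun s : ℝ => (r x : ℂ) * exp ((ω * s : ℝ) * I)) y) =
      -I * (ω * (r x * deriv r x) : ℝ) := by
  rw [deriv_ofReal_mul_const hr, deriv_const_mul_exp_ofReal_mul_I]
  have h := exp_ofReal_mul_I_mul_conj (ω * y)
  simp only [map_mul, conj_ofReal, conj_I] at h ⊢
  push_cast at h ⊢
  linear_combination (-I * ω * r x * ((deriv r x : ℝ) : ℂ)) * h

lemma sum_mul_mul_deriv_eq_zero {ι : Type*} [Fintype ι] {r : ι → ℝ → ℝ} {ω : ι → ℝ} {x : ℝ}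
    (hr : ∀ j, DifferentiableAt ℝ (r j) x) (hsum : ∀ t, ∑ j, ω j * r j t ^ 2 = 0) :
    ∑ j, ω j * (r j x * deriv (r j) x) = 0 := by
  have hderiv : HasDerivAt (fun t => ∑ j, ω j * r j t ^ 2)
      (∑ j, ω j * (2 * r j x * deriv (r j) x)) x := by
    refine HasDerivAt.fun_sum fun j _ => ?_
    simpa [mul_comm] using ((hr j).hasDerivAt.pow 2).const_mul (ω j)
  have hzero : HasDerivAt (fun t => ∑ j, ω j * r j t ^ 2) 0 x := by
    simpa only [hsum] using hasDerivAt_const x (0 : ℝ)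
  have := hderiv.unique hzero
  calc ∑ j, ω j * (r j x * deriv (r j) x)
      = (∑ j, ω j * (2 * r j x * deriv (r j) x)) / 2 := by
        rw [Finset.sum_div]; congr 1; ext j; ring
    _ = 0 := by rw [this, zero_div]

noncomputable def coneRadicand (m n : ℕ) (t : ℝ) : ℝ :=
  (n : ℝ) * Real.cos t ^ 2 / ((m : ℝ) + 2 * n) + (m : ℝ) * Real.sin t ^ 2 / (2 * (m : ℝ) + n)

lemma coneRadicand_nonneg (m n : ℕ) (t : ℝ) : 0 ≤ coneRadicand m n t := by
  unfold coneRadicand; positivity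

lemma coneRadicand_pos {m n : ℕ} (hm : 0 < m) (hn : 0 < n) (t : ℝ) : 0 < coneRadicand m n t := by
  have hm' : (0 : ℝ) < m := by exact_mod_cast hm
  have hn' : (0 : ℝ) < n := by exact_mod_cast hn
  rw [coneRadicand, div_add_div _ _ (by positivity) (by positivity)]
  refine div_pos ?_ (by positivity)
  have h : (n : ℝ) * Real.cos t ^ 2 * (2 * m + n) + (m + 2 * n) * (m * Real.sin t ^ 2) =
      2 * m * n + (n * Real.cos t) ^ 2 + (m * Real.sin t) ^ 2 := by
    linear_combination (2 * (m : ℝ) * n) * Real.sin_sq_add_cos_sq t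
  rw [h]
  positivity

noncomputable def coneAmplitude (m n : ℕ) : Fin 3 → ℝ → ℝ :=
  ![fun t => Real.sin t * Real.sqrt ((m : ℝ) + n) / Real.sqrt (2 * (m : ℝ) + n),
    fun t => Real.cos t * Real.sqrt ((m : ℝ) + n) / Real.sqrt ((m : ℝ) + 2 * n),
    fun t => Real.sqrt (coneRadicand m n t)]

noncomputable def coneFrequency (m n : ℕ) : Fin 3 → ℝ :=
  ![Real.pi * m, Real.pi * n, -(Real.pi * ((m : ℝ) + n))]

lemma conePhi_eq (m n : ℕ) (x y : ℝ) (j : Fin 3) :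
    conePhi m n x y j = (coneAmplitude m n j x : ℂ) * exp ((coneFrequency m n j * y : ℝ) * I) := by
  match j with
  | 0 | 1 | 2 =>
    simp only [conePhi, coneAmplitude, coneRadicand, coneFrequency, Matrix.cons_val]
    push_cast
    ring_nf

lemma sum_coneFrequency_mul_coneAmplitude_sq (m n : ℕ) (t : ℝ) :
    ∑ j, coneFrequency m n j * coneAmplitude m n j t ^ 2 = 0 := by
  simp only [Fin.sum_univ_three, coneFrequency, coneAmplitude, Matrix.cons_val_zero,
    Matrix.cons_val_one, Matrix.cons_val_two, Matrix.head_cons, Matrix.tail_cons, div_pow,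
    mul_pow, Real.sq_sqrt (coneRadicand_nonneg m n t), Real.sq_sqrt (by positivity : (0 : ℝ) ≤ m + n),
    Real.sq_sqrt (by positivity : (0 : ℝ) ≤ 2 * m + n),
    Real.sq_sqrt (by positivity : (0 : ℝ) ≤ m + 2 * n)]
  rw [coneRadicand]
  ring

lemma differentiableAt_coneAmplitude {m n : ℕ} (hm : 0 < m) (hn : 0 < n) (x : ℝ) (j : Fin 3) :
    DifferentiableAt ℝ (coneAmplitude m n j) x := by
  match j with
  | 0 | 1 => simp only [coneAmplitude, Matrix.cons_val]; fun_prop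
  | 2 =>
    simp only [coneAmplitude, Matrix.cons_val]
    exact (by unfold coneRadicand; fun_prop : DifferentiableAt ℝ (coneRadicand m n) x).sqrt (coneRadicand_pos hm hn x).ne'

/-- `⟨∂φ/∂x, ∂φ/∂y⟩ = 0` identically, so the induced metric is diagonal. -/
theorem stmt_3 (m n : ℕ) (hm : 0 < m) (hn : 0 < n) (x y : ℝ) :
    ∑ j : Fin 3, deriv (fun t : ℝ => conePhi m n t y j) x *
      (starRingEnd ℂ) (deriv (fun t : ℝ => conePhi m n x t j) y) = 0 := by
  have hr := differentiableAt_coneAmplitude hm hn x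
  calc ∑ j : Fin 3, deriv (fun t : ℝ => conePhi m n t y j) x *
        (starRingEnd ℂ) (deriv (fun t : ℝ => conePhi m n x t j) y)
      = ∑ j, -I * ((coneFrequency m n j *
          (coneAmplitude m n j x * deriv (coneAmplitude m n j) x) : ℝ) : ℂ) :=
        Finset.sum_congr rfl fun j _ => by
          simpa only [conePhi_eq] using deriv_mul_conj_deriv_of_phase (hr j) _ y
    _ = 0 := by
      rw [← Finset.mul_sum, ← ofReal_sum,
        sum_mul_mul_deriv_eq_zero hr (sum_coneFrequency_mul_coneAmplitude_sq m n), ofReal_zero,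
        mul_zero]
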